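/- Vertical-flip near-invariance of the Funnel bound: for any finite point set P with distinct x- and y-coordinates of size m, Funnel(P) ≥ Funnel(rev(P)) − O(m), where rev(P) = {(x,−y) : (x,y) ∈ P}; concretely, Funnel(P) ≥ Funnel(rev(P)) − 4m. -/

import Mathlib

/-- Number of maximal blocks of equal symbols in a string over `{L,R}` (as `Bool`s). -/
def blocks : List Bool → ℕ
  | [] => 0
  | [_] => 1
  | a :: b :: l => (if a = b then 0 else 1) + blocks (b :: l)

/-- The labeled merge of two finite sets of reals: sort `L ∪ R` increasingly and
label each element by whether it came from `L` (`true`) or not. -/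
noncomputable def mix (L R : Finset ℝ) : List Bool :=
  ((L ∪ R).sort (· ≤ ·)).map (fun x => decide (x ∈ L))

/-- `mixValue L R` is the number of maximal same-origin blocks in the merged sorted sequence. -/
noncomputable def mixValue (L R : Finset ℝ) : ℕ := blocks (mix L R)
/-- Membership in the minimal axis-aligned rectangle spanned by `p` and `q`. -/
def inRect (p q t : ℝ × ℝ) : Prop :=
  min p.1 q.1 ≤ t.1 ∧ t.1 ≤ max p.1 q.1 ∧ min p.2 q.2 ≤ t.2 ∧ t.2 ≤ max p.2 q.2

noncomputable instance (p q t : ℝ × ℝ) : Decidable (inRect p q t) := by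
  unfold inRect; infer_instance

/-- The left funnel of `p` within `P`. -/
noncomputable def FL (P : Finset (ℝ × ℝ)) (p : ℝ × ℝ) : Finset (ℝ × ℝ) :=
  P.filter (fun q => q.2 < p.2 ∧ q.1 < p.1 ∧ ∀ t ∈ P, inRect p q t → t = p ∨ t = q)

/-- The right funnel of `p` within `P`. -/
noncomputable def FR (P : Finset (ℝ × ℝ)) (p : ℝ × ℝ) : Finset (ℝ × ℝ) :=
  P.filter (fun q => q.2 < p.2 ∧ q.1 > p.1 ∧ ∀ t ∈ P, inRect p q t → t = p ∨ t = q)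

/-- The funnel contribution `f(P,p)`. -/
noncomputable def fContrib (P : Finset (ℝ × ℝ)) (p : ℝ × ℝ) : ℕ :=
  mixValue ((FL P p).image Prod.snd) ((FR P p).image Prod.snd)

/-- Wilber's Funnel bound. -/
noncomputable def Funnel (P : Finset (ℝ × ℝ)) : ℕ := ∑ p ∈ P, fContrib P p

/-- All points of `P` have distinct `y`-coordinates. -/
def DistinctY (P : Finset (ℝ × ℝ)) : Prop :=
  ∀ p ∈ P, ∀ q ∈ P, p.2 = q.2 → p = q

/-- All points of `P` have distinct `x`-coordinates. -/
def DistinctX (P : Finset (ℝ × ℝ)) : Prop :=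
  ∀ p ∈ P, ∀ q ∈ P, p.1 = q.1 → p = q
/-- `(p,q,r,s)` is a z-rectangle of `P`. -/
def IsZRect (P : Finset (ℝ × ℝ)) (p q r s : ℝ × ℝ) : Prop :=
  p ∈ P ∧ q ∈ P ∧ r ∈ P ∧ s ∈ P ∧
  q.1 < p.1 ∧ p.1 < r.1 ∧ r.1 < s.1 ∧
  r.2 < q.2 ∧ q.2 < s.2 ∧ s.2 < p.2 ∧
  ∀ t ∈ P, q.1 ≤ t.1 → t.1 ≤ s.1 → r.2 ≤ t.2 → t.2 ≤ p.2 →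
    (t = p ∨ t = q ∨ t = r ∨ t = s)

noncomputable instance (P : Finset (ℝ × ℝ)) (p q r s : ℝ × ℝ) : Decidable (IsZRect P p q r s) := by
  unfold IsZRect; infer_instance

/-- The number of z-rectangles of `P`. -/
noncomputable def zRects (P : Finset (ℝ × ℝ)) : ℕ :=
  ((P ×ˢ P ×ˢ P ×ˢ P).filter
    (fun t => IsZRect P t.1 t.2.1 t.2.2.1 t.2.2.2)).card

/-
Sort the funnel of `p` by height and mark each point L or R according to its side, so that
`f(P, p)` is the number of blocks of the resulting word. The z-rectangles with top corner `p`
correspond exactly to the pairs of R-points that are consecutive among the R-points and have an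
L-point between them (the left corner is the lowest such L-point). Each such gap accounts for one
L-to-R and one R-to-L switch of the word, and apart from the first block at most two switches are
unaccounted for, so `2 zRects P ≤ Funnel P ≤ 2 zRects P + 3 |P|`. The rotation by 180° preserves
z-rectangles and the reflection `x ↦ -x` preserves the Funnel bound; their composite is the time
reversal `y ↦ -y`.
-/

open Finset Pointwise

section LinearOrder

variable {α : Type*} [LinearOrder α]

def Consecutive (S : Finset α) (a b : α) : Prop :=
  a < b ∧ ∀ c ∈ S, ¬(a < c ∧ c < b)

instance (S : Finset α) (a b : α) : Decidable (Consecutive S a b) :=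
  inferInstanceAs (Decidable (_ ∧ _))

variable {S : Finset α} {a a' b b' c : α}

lemma Consecutive.left_unique (h : Consecutive S a b) (h' : Consecutive S a' b)
    (ha : a ∈ S) (ha' : a' ∈ S) : a = a' := by
  by_contra hne
  rcases lt_or_gt_of_ne hne with hlt | hlt
  · exact h.2 a' ha' ⟨hlt, h'.1⟩
  · exact h'.2 a ha ⟨hlt, h.1⟩

lemma Consecutive.right_unique (h : Consecutive S a b) (h' : Consecutive S a b')
    (hb : b ∈ S) (hb' : b' ∈ S) : b = b' := by
  by_contra hne
  rcases lt_or_gt_of_ne hne with hlt | hlt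
  · exact h'.2 b hb ⟨h.1, hlt⟩
  · exact h.2 b' hb' ⟨h'.1, hlt⟩

lemma exists_consecutive_below (hc : c ∈ S) (hcb : c < b) :
    ∃ a ∈ S, c ≤ a ∧ Consecutive S a b := by
  obtain ⟨a, ha, hmax⟩ := (S.filter (· < b)).exists_max_image id ⟨c, mem_filter.2 ⟨hc, hcb⟩⟩
  obtain ⟨haS, hab⟩ := mem_filter.1 ha
  exact ⟨a, haS, hmax c (mem_filter.2 ⟨hc, hcb⟩),
    hab, fun d hd ⟨had, hdb⟩ => (hmax d (mem_filter.2 ⟨hd, hdb⟩)).not_gt had⟩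

lemma exists_consecutive_above (hc : c ∈ S) (hbc : b < c) :
    ∃ a ∈ S, a ≤ c ∧ Consecutive S b a := by
  obtain ⟨a, ha, hmin⟩ := (S.filter (b < ·)).exists_min_image id ⟨c, mem_filter.2 ⟨hc, hbc⟩⟩
  obtain ⟨haS, hba⟩ := mem_filter.1 ha
  exact ⟨a, haS, hmin c (mem_filter.2 ⟨hc, hbc⟩),
    hba, fun d hd ⟨hbd, hda⟩ => (hmin d (mem_filter.2 ⟨hd, hbd⟩)).not_gt hda⟩

def labelSwitches (f : α → Bool) (U : Finset α) : Finset (α × α) :=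
  (U ×ˢ U).filter fun ab => f ab.1 ≠ f ab.2 ∧ Consecutive U ab.1 ab.2

lemma mem_labelSwitches {f : α → Bool} {U : Finset α} {a b : α} :
    (a, b) ∈ labelSwitches f U ↔ a ∈ U ∧ b ∈ U ∧ f a ≠ f b ∧ Consecutive U a b := by
  simp [labelSwitches, and_assoc]

lemma labelSwitches_insert_of_lt (f : α → Bool) {x y : α} (hx : ∀ c ∈ S, x < c) (hy : y ∈ S)
    (hmin : ∀ c ∈ S, y ≤ c) :
    labelSwitches f (insert x S) =
      if f x = f y then labelSwitches f S else insert (x, y) (labelSwitches f S) := by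
  have key : ∀ a b, (a, b) ∈ labelSwitches f (insert x S) ↔
      (a = x ∧ b = y ∧ f x ≠ f y) ∨ (a, b) ∈ labelSwitches f S := by
    intro a b
    simp only [mem_labelSwitches, mem_insert, Consecutive]
    have hxy := hx y hy
    grind
  ext ⟨a, b⟩
  split_ifs with h <;> simp [key, h]

lemma blocks_map_of_pairwise (f : α → Bool) :
    ∀ l : List α, l.Pairwise (· < ·) →
      blocks (l.map f) = (if l = [] then 0 else 1) + #(labelSwitches f l.toFinset)
  | [], _ => by simp [blocks, labelSwitches]
  | [x], _ => by
    have : labelSwitches f {x} = ∅ := by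
      ext ⟨a, b⟩
      simp only [mem_labelSwitches, mem_singleton, notMem_empty, iff_false, Consecutive]
      grind
    simp [blocks, this]
  | x :: y :: t, hs => by
    obtain ⟨hx, hyt⟩ := List.pairwise_cons.1 hs
    have hins := labelSwitches_insert_of_lt f (S := (y :: t).toFinset) (x := x) (y := y)
      (by simpa using hx) (by simp)
      (by simpa using fun c hc => ((List.pairwise_cons.1 hyt).1 c hc).le)
    rw [List.map_cons, List.map_cons, blocks, ← List.map_cons, blocks_map_of_pairwise f _ hyt,
      show (x :: y :: t).toFinset = insert x (y :: t).toFinset from List.toFinset_cons, hins]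
    have hxS : (x, y) ∉ labelSwitches f (y :: t).toFinset := fun h =>
      (hx x (by simpa using (mem_labelSwitches.1 h).1)).false
    by_cases h : f x = f y
    · simp [h]
    · rw [if_neg h, if_neg h, card_insert_of_notMem hxS]
      simp only [reduceCtorEq, if_false]
      ring

lemma blocks_map_sort (f : α → Bool) (U : Finset α) :
    blocks ((U.sort (· ≤ ·)).map f) = (if U = ∅ then 0 else 1) + #(labelSwitches f U) := by
  have hnil : U.sort (· ≤ ·) = [] ↔ U = ∅ := by
    rw [← List.length_eq_zero_iff, length_sort, card_eq_zero]
  rw [blocks_map_of_pairwise f _ (U.sortedLT_sort).pairwise, sort_toFinset]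
  simp only [hnil]

section Switches

variable {L R : Finset α}

def switchPairs (L R : Finset α) : Finset (α × α) :=
  (L ×ˢ R).filter fun ab => Consecutive (L ∪ R) ab.1 ab.2

def zPairs (L R : Finset α) : Finset (α × α) :=
  (R ×ˢ R).filter fun rs => Consecutive R rs.1 rs.2 ∧ ∃ l ∈ L, rs.1 < l ∧ l < rs.2

lemma mem_switchPairs {a b : α} :
    (a, b) ∈ switchPairs L R ↔ a ∈ L ∧ b ∈ R ∧ Consecutive (L ∪ R) a b := by
  simp [switchPairs, and_assoc]

lemma mem_zPairs {r s : α} :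
    (r, s) ∈ zPairs L R ↔ r ∈ R ∧ s ∈ R ∧ Consecutive R r s ∧ ∃ l ∈ L, r < l ∧ l < s := by
  simp [zPairs, and_assoc]

lemma labelSwitches_mem_union (h : Disjoint L R) :
    labelSwitches (fun x => decide (x ∈ L)) (L ∪ R) = switchPairs L R ∪ switchPairs R L := by
  ext ⟨a, b⟩
  simp only [mem_labelSwitches, mem_union, mem_switchPairs, union_comm R L]
  have hL : ∀ x ∈ L, x ∉ R := fun _ hx => Finset.disjoint_left.1 h hx
  grind

lemma card_switchPairs_eq_card_image_snd :
    #(switchPairs L R) = #((switchPairs L R).image Prod.snd) := by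
  refine (card_image_of_injOn ?_).symm
  rintro ⟨a, b⟩ hab ⟨a', b'⟩ hab' (rfl : b = b')
  obtain ⟨ha, -, hc⟩ := mem_switchPairs.1 hab
  obtain ⟨ha', -, hc'⟩ := mem_switchPairs.1 hab'
  rw [hc.left_unique hc' (mem_union_left _ ha) (mem_union_left _ ha')]

lemma card_switchPairs_eq_card_image_fst :
    #(switchPairs L R) = #((switchPairs L R).image Prod.fst) := by
  refine (card_image_of_injOn ?_).symm
  rintro ⟨a, b⟩ hab ⟨a', b'⟩ hab' (rfl : a = a')
  obtain ⟨-, hb, hc⟩ := mem_switchPairs.1 hab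
  obtain ⟨-, hb', hc'⟩ := mem_switchPairs.1 hab'
  rw [hc.right_unique hc' (mem_union_right _ hb) (mem_union_right _ hb')]

lemma card_zPairs_eq_card_image_snd : #(zPairs L R) = #((zPairs L R).image Prod.snd) := by
  refine (card_image_of_injOn ?_).symm
  rintro ⟨r, s⟩ hrs ⟨r', s'⟩ hrs' (rfl : s = s')
  obtain ⟨hr, -, hc, -⟩ := mem_zPairs.1 hrs
  obtain ⟨hr', -, hc', -⟩ := mem_zPairs.1 hrs'
  rw [hc.left_unique hc' hr hr']

lemma card_zPairs_eq_card_image_fst : #(zPairs L R) = #((zPairs L R).image Prod.fst) := by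
  refine (card_image_of_injOn ?_).symm
  rintro ⟨r, s⟩ hrs ⟨r', s'⟩ hrs' (rfl : r = r')
  obtain ⟨-, hs, hc, -⟩ := mem_zPairs.1 hrs
  obtain ⟨-, hs', hc', -⟩ := mem_zPairs.1 hrs'
  rw [hc.right_unique hc' hs hs']

lemma card_filter_isLeast_le_one (R : Finset α) : #(R.filter fun b => ∀ c ∈ R, b ≤ c) ≤ 1 :=
  card_le_one.2 fun _ hb _ hb' => le_antisymm
    ((mem_filter.1 hb).2 _ (mem_filter.1 hb').1) ((mem_filter.1 hb').2 _ (mem_filter.1 hb).1)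

lemma card_filter_isGreatest_le_one (R : Finset α) : #(R.filter fun b => ∀ c ∈ R, c ≤ b) ≤ 1 :=
  card_le_one.2 fun _ hb _ hb' => le_antisymm
    ((mem_filter.1 hb').2 _ (mem_filter.1 hb).1) ((mem_filter.1 hb).2 _ (mem_filter.1 hb').1)

lemma card_zPairs_le_card_switchPairs : #(zPairs L R) ≤ #(switchPairs L R) := by
  rw [card_zPairs_eq_card_image_snd, card_switchPairs_eq_card_image_snd]
  refine card_le_card fun s hs => ?_
  obtain ⟨⟨r, s⟩, hrs, rfl⟩ := mem_image.1 hs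
  obtain ⟨-, hs, hgap, l, hl, hrl, hls⟩ := mem_zPairs.1 hrs
  obtain ⟨a, ha, hla, hcons⟩ := exists_consecutive_below (mem_union_left R hl) hls
  have haL : a ∈ L := (mem_union.1 ha).resolve_right fun haR =>
    hgap.2 a haR ⟨hrl.trans_le hla, hcons.1⟩
  exact mem_image.2 ⟨(a, s), mem_switchPairs.2 ⟨haL, hs, hcons⟩, rfl⟩

lemma card_zPairs_le_card_switchPairs_swap : #(zPairs L R) ≤ #(switchPairs R L) := by
  rw [card_zPairs_eq_card_image_fst, card_switchPairs_eq_card_image_fst]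
  refine card_le_card fun r hr => ?_
  obtain ⟨⟨r, s⟩, hrs, rfl⟩ := mem_image.1 hr
  obtain ⟨hr, -, hgap, l, hl, hrl, hls⟩ := mem_zPairs.1 hrs
  obtain ⟨b, hb, hbl, hcons⟩ := exists_consecutive_above (mem_union_right R hl) hrl
  have hbL : b ∈ L := (mem_union.1 hb).resolve_left fun hbR =>
    hgap.2 b hbR ⟨hcons.1, hbl.trans_lt hls⟩
  exact mem_image.2 ⟨(r, b), mem_switchPairs.2 ⟨hr, hbL, hcons⟩, rfl⟩

lemma card_switchPairs_le_card_zPairs_add_one (h : Disjoint L R) :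
    #(switchPairs L R) ≤ #(zPairs L R) + 1 := by
  rw [card_zPairs_eq_card_image_snd, card_switchPairs_eq_card_image_snd]
  have hsub : (switchPairs L R).image Prod.snd ⊆
      (zPairs L R).image Prod.snd ∪ R.filter fun b => ∀ c ∈ R, b ≤ c := by
    intro s hs
    obtain ⟨⟨a, s⟩, has, rfl⟩ := mem_image.1 hs
    obtain ⟨ha, hs, hcons⟩ := mem_switchPairs.1 has
    by_cases hmin : ∀ c ∈ R, s ≤ c
    · exact mem_union_right _ (mem_filter.2 ⟨hs, hmin⟩)
    obtain ⟨c, hc, hcs⟩ : ∃ c ∈ R, c < s := by simpa using hmin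
    obtain ⟨r, hr, -, hrs⟩ := exists_consecutive_below hc hcs
    have hra : r < a := lt_of_le_of_ne
      (not_lt.1 fun har => hcons.2 r (mem_union_right L hr) ⟨har, hrs.1⟩)
      (fun hra => disjoint_left.1 h ha (hra ▸ hr))
    exact mem_union_left _
      (mem_image.2 ⟨(r, s), mem_zPairs.2 ⟨hr, hs, hrs, a, ha, hra, hcons.1⟩, rfl⟩)
  exact (card_le_card hsub).trans
    ((card_union_le _ _).trans (Nat.add_le_add_left (card_filter_isLeast_le_one R) _))

lemma card_switchPairs_swap_le_card_zPairs_add_one (h : Disjoint L R) :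
    #(switchPairs R L) ≤ #(zPairs L R) + 1 := by
  rw [card_zPairs_eq_card_image_fst, card_switchPairs_eq_card_image_fst]
  have hsub : (switchPairs R L).image Prod.fst ⊆
      (zPairs L R).image Prod.fst ∪ R.filter fun b => ∀ c ∈ R, c ≤ b := by
    intro r hr
    obtain ⟨⟨r, b⟩, hrb, rfl⟩ := mem_image.1 hr
    obtain ⟨hr, hb, hcons⟩ := mem_switchPairs.1 hrb
    by_cases hmax : ∀ c ∈ R, c ≤ r
    · exact mem_union_right _ (mem_filter.2 ⟨hr, hmax⟩)
    obtain ⟨c, hc, hrc⟩ : ∃ c ∈ R, r < c := by simpa using hmax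
    obtain ⟨s, hs, -, hrs⟩ := exists_consecutive_above hc hrc
    have hbs : b < s := lt_of_le_of_ne
      (not_lt.1 fun hsb => hcons.2 s (mem_union_left L hs) ⟨hrs.1, hsb⟩)
      (fun hbs => disjoint_left.1 h hb (hbs ▸ hs))
    exact mem_union_left _
      (mem_image.2 ⟨(r, s), mem_zPairs.2 ⟨hr, hs, hrs, b, hb, hcons.1, hbs⟩, rfl⟩)
  exact (card_le_card hsub).trans
    ((card_union_le _ _).trans (Nat.add_le_add_left (card_filter_isGreatest_le_one R) _))

end Switches

end LinearOrder

lemma mixValue_eq {L R : Finset ℝ} (h : Disjoint L R) :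
    mixValue L R = (if L ∪ R = ∅ then 0 else 1) + #(switchPairs L R) + #(switchPairs R L) := by
  rw [mixValue, mix, blocks_map_sort, labelSwitches_mem_union h, card_union_of_disjoint, add_assoc]
  rw [Finset.disjoint_left]
  rintro ⟨a, b⟩ h₁ h₂
  exact Finset.disjoint_left.1 h (mem_switchPairs.1 h₁).1 (mem_switchPairs.1 h₂).1

lemma mixValue_comm {L R : Finset ℝ} (h : Disjoint L R) : mixValue R L = mixValue L R := by
  rw [mixValue_eq h.symm, mixValue_eq h, union_comm]
  ring

lemma two_mul_card_zPairs_le_mixValue {L R : Finset ℝ} (h : Disjoint L R) :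
    2 * #(zPairs L R) ≤ mixValue L R := by
  rw [mixValue_eq h]
  have := card_zPairs_le_card_switchPairs (L := L) (R := R)
  have := card_zPairs_le_card_switchPairs_swap (L := L) (R := R)
  omega

lemma mixValue_le_two_mul_card_zPairs_add_three {L R : Finset ℝ} (h : Disjoint L R) :
    mixValue L R ≤ 2 * #(zPairs L R) + 3 := by
  rw [mixValue_eq h]
  have := card_switchPairs_le_card_zPairs_add_one h
  have := card_switchPairs_swap_le_card_zPairs_add_one h
  split_ifs <;> omega

lemma inRect_trans {p t c u : ℝ × ℝ} (hc : inRect p t c) (hu : inRect p c u) : inRect p t u := by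
  unfold inRect at *
  grind

section Funnel

variable {P : Finset (ℝ × ℝ)} {p q r s t : ℝ × ℝ}

lemma mem_FL_iff : q ∈ FL P p ↔ q ∈ P ∧ q.2 < p.2 ∧ q.1 < p.1 ∧
    ∀ t ∈ P, q.1 ≤ t.1 → t.1 ≤ p.1 → q.2 ≤ t.2 → t.2 ≤ p.2 → t = p ∨ t = q := by
  simp only [FL, inRect]
  grind

lemma mem_FR_iff : q ∈ FR P p ↔ q ∈ P ∧ q.2 < p.2 ∧ p.1 < q.1 ∧
    ∀ t ∈ P, p.1 ≤ t.1 → t.1 ≤ q.1 → q.2 ≤ t.2 → t.2 ≤ p.2 → t = p ∨ t = q := by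
  simp only [FR, inRect]
  grind

lemma mem_of_mem_FL (h : q ∈ FL P p) : q ∈ P := (mem_FL_iff.1 h).1

lemma mem_of_mem_FR (h : q ∈ FR P p) : q ∈ P := (mem_FR_iff.1 h).1

lemma fst_lt_of_mem_FL (h : q ∈ FL P p) : q.1 < p.1 := (mem_FL_iff.1 h).2.2.1

lemma lt_fst_of_mem_FR (h : q ∈ FR P p) : p.1 < q.1 := (mem_FR_iff.1 h).2.2.1

lemma disjoint_image_snd_FL_FR (hY : DistinctY P) :
    Disjoint ((FL P p).image Prod.snd) ((FR P p).image Prod.snd) := by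
  simp only [disjoint_left, mem_image]
  rintro _ ⟨a, ha, rfl⟩ ⟨b, hb, hab⟩
  obtain rfl := hY a (mem_of_mem_FL ha) b (mem_of_mem_FR hb) hab.symm
  exact (fst_lt_of_mem_FL ha).not_gt (lt_fst_of_mem_FR hb)

lemma fst_lt_of_mem_FL_of_snd_lt {a b : ℝ × ℝ} (ha : a ∈ FL P p) (hb : b ∈ FL P p)
    (h : a.2 < b.2) : b.1 < a.1 := by
  by_contra! hle
  obtain ⟨haP, -, -, hbox⟩ := mem_FL_iff.1 ha
  obtain ⟨hbP, hbp, hbp1, -⟩ := mem_FL_iff.1 hb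
  rcases hbox b hbP hle hbp1.le h.le hbp.le with rfl | rfl <;> simp at *

lemma fst_lt_of_mem_FR_of_snd_lt {a b : ℝ × ℝ} (ha : a ∈ FR P p) (hb : b ∈ FR P p)
    (h : a.2 < b.2) : a.1 < b.1 := by
  by_contra! hle
  obtain ⟨haP, -, -, hbox⟩ := mem_FR_iff.1 ha
  obtain ⟨hbP, hbp, hbp1, -⟩ := mem_FR_iff.1 hb
  rcases hbox b hbP hbp1.le hle h.le hbp.le with rfl | rfl <;> simp at *

lemma exists_mem_funnel_inRect (hX : DistinctX P) (hY : DistinctY P) (hp : p ∈ P) (ht : t ∈ P)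
    (htp : t.2 < p.2) : ∃ c ∈ FL P p ∪ FR P p, inRect p t c := by
  set S := P.filter fun u => u ≠ p ∧ inRect p t u
  have htS : t ∈ S := mem_filter.2 ⟨ht, fun h => (h ▸ htp).false, by simp [inRect]⟩
  obtain ⟨c, hcS, hmax⟩ := S.exists_max_image Prod.snd ⟨t, htS⟩
  obtain ⟨hcP, hcp, hct⟩ := mem_filter.1 hcS
  have hc2 : c.2 < p.2 := lt_of_le_of_ne (by unfold inRect at hct; grind)
    fun h => hcp (hY c hcP p hp h)
  have hc1 : c.1 ≠ p.1 := fun h => hcp (hX c hcP p hp h)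
  have hempty : ∀ u ∈ P, inRect p c u → u = p ∨ u = c := by
    intro u hu hcu
    by_cases hup : u = p
    · exact Or.inl hup
    have hu2 := hmax u (mem_filter.2 ⟨hu, hup, inRect_trans hct hcu⟩)
    exact Or.inr (hY u hu c hcP (by unfold inRect at hcu; grind))
  refine ⟨c, ?_, hct⟩
  rcases lt_or_gt_of_ne hc1 with h | h
  · exact mem_union_left _ (mem_filter.2 ⟨hcP, hc2, h, hempty⟩)
  · exact mem_union_right _ (mem_filter.2 ⟨hcP, hc2, h, hempty⟩)

namespace IsZRect

lemma left_mem_FL (hz : IsZRect P p q r s) : q ∈ FL P p := by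
  obtain ⟨-, hq, -, -, hqp, hpr, hrs, hrq, hqs, hsp, hbox⟩ := hz
  refine mem_FL_iff.2 ⟨hq, hqs.trans hsp, hqp, fun t ht h1 h2 h3 h4 => ?_⟩
  rcases hbox t ht h1 (by linarith) (by linarith) h4 with rfl | rfl | rfl | rfl <;> grind

lemma bottom_mem_FR (hz : IsZRect P p q r s) : r ∈ FR P p := by
  obtain ⟨-, -, hr, -, hqp, hpr, hrs, hrq, hqs, hsp, hbox⟩ := hz
  refine mem_FR_iff.2 ⟨hr, by linarith, hpr, fun t ht h1 h2 h3 h4 => ?_⟩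
  rcases hbox t ht (by linarith) (by linarith) h3 h4 with rfl | rfl | rfl | rfl <;> grind

lemma right_mem_FR (hz : IsZRect P p q r s) : s ∈ FR P p := by
  obtain ⟨-, -, -, hs, hqp, hpr, hrs, hrq, hqs, hsp, hbox⟩ := hz
  refine mem_FR_iff.2 ⟨hs, hsp, hpr.trans hrs, fun t ht h1 h2 h3 h4 => ?_⟩
  rcases hbox t ht (by linarith) h2 (by linarith) h4 with rfl | rfl | rfl | rfl <;> grind

lemma not_mem_FR_between (hz : IsZRect P p q r s) {c : ℝ × ℝ} (hc : c ∈ FR P p) :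
    ¬(r.2 < c.2 ∧ c.2 < s.2) := by
  rintro ⟨hrc, hcs⟩
  have hcs1 := fst_lt_of_mem_FR_of_snd_lt hc hz.right_mem_FR hcs
  obtain ⟨hcP, hcp, hpc, -⟩ := mem_FR_iff.1 hc
  obtain ⟨-, -, -, -, hqp, hpr, hrs, hrq, hqs, hsp, hbox⟩ := hz
  rcases hbox c hcP (by linarith) hcs1.le hrc.le hcp.le with rfl | rfl | rfl | rfl <;> grind

lemma snd_le_of_mem_FL (hz : IsZRect P p q r s) {c : ℝ × ℝ} (hc : c ∈ FL P p)
    (hrc : r.2 < c.2) : q.2 ≤ c.2 := by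
  by_contra! hcq
  have hqc1 := fst_lt_of_mem_FL_of_snd_lt hc hz.left_mem_FL hcq
  obtain ⟨hcP, hcp, hcp1, -⟩ := mem_FL_iff.1 hc
  obtain ⟨-, -, -, -, hqp, hpr, hrs, hrq, hqs, hsp, hbox⟩ := hz
  rcases hbox c hcP hqc1.le (by linarith) hrc.le hcp.le with rfl | rfl | rfl | rfl <;> grind

end IsZRect

lemma isZRect_of_consecutive (hX : DistinctX P) (hY : DistinctY P) (hp : p ∈ P)
    (hq : q ∈ FL P p) (hr : r ∈ FR P p) (hs : s ∈ FR P p) (hrq : r.2 < q.2) (hqs : q.2 < s.2)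
    (hgap : ∀ c ∈ FR P p, ¬(r.2 < c.2 ∧ c.2 < s.2))
    (hlow : ∀ c ∈ FL P p, r.2 < c.2 → q.2 ≤ c.2) : IsZRect P p q r s := by
  obtain ⟨hqP, -, hqp, -⟩ := mem_FL_iff.1 hq
  obtain ⟨hrP, -, hpr, -⟩ := mem_FR_iff.1 hr
  obtain ⟨hsP, hsp, -, -⟩ := mem_FR_iff.1 hs
  have hrs := fst_lt_of_mem_FR_of_snd_lt hr hs (hrq.trans hqs)
  refine ⟨hp, hqP, hrP, hsP, hqp, hpr, hrs, hrq, hqs, hsp, fun t ht h1 h2 h3 h4 => ?_⟩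
  -- `t ≠ p` has a funnel point `c` in its rectangle with `p`; `c` lies in the box, so it is
  -- `q`, `r` or `s`, and that pins down `t`.
  by_cases htp : t.2 = p.2
  · exact Or.inl (hY t ht p hp htp)
  obtain ⟨c, hc, htc⟩ := exists_mem_funnel_inRect hX hY hp ht (lt_of_le_of_ne h4 htp)
  unfold inRect at htc
  rcases mem_union.1 hc with hc | hc
  · have hcp := fst_lt_of_mem_FL hc
    have hcq : c = q := by
      refine hY c (mem_of_mem_FL hc) q hqP (le_antisymm ?_ (hlow c hc ?_))
      · by_contra! hqc
        have hcq1 := fst_lt_of_mem_FL_of_snd_lt hq hc hqc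
        grind
      · refine lt_of_le_of_ne (by grind) fun h => ?_
        have hrc := hY r hrP c (mem_of_mem_FL hc) h
        grind
    subst hcq
    exact Or.inr (Or.inl (hX t ht c hqP (by grind)))
  · have hpc := lt_fst_of_mem_FR hc
    have hcs : c.2 ≤ s.2 := by
      by_contra! hsc
      have hsc1 := fst_lt_of_mem_FR_of_snd_lt hs hc hsc
      grind
    have hc_gap := hgap c hc
    rcases (by grind : c.2 = r.2 ∨ c.2 = s.2) with hcr | hcs'
    · obtain rfl := hY c (mem_of_mem_FR hc) r hrP hcr
      exact Or.inr (Or.inr (Or.inl (hY t ht c hrP (by grind))))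
    · obtain rfl := hY c (mem_of_mem_FR hc) s hsP hcs'
      exact Or.inr (Or.inr (Or.inr (hX t ht c hsP (by grind))))

end Funnel

lemma mem_zRectTuples {P : Finset (ℝ × ℝ)} {z : (ℝ × ℝ) × (ℝ × ℝ) × (ℝ × ℝ) × (ℝ × ℝ)} :
    z ∈ (P ×ˢ P ×ˢ P ×ˢ P).filter (fun t => IsZRect P t.1 t.2.1 t.2.2.1 t.2.2.2) ↔
      IsZRect P z.1 z.2.1 z.2.2.1 z.2.2.2 := by
  simp only [mem_filter, mem_product, and_iff_right_iff_imp]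
  exact fun hz => ⟨hz.1, hz.2.1, hz.2.2.1, hz.2.2.2.1⟩

theorem zRects_eq_sum {P : Finset (ℝ × ℝ)} (hX : DistinctX P) (hY : DistinctY P) :
    zRects P = ∑ p ∈ P, #(zPairs ((FL P p).image Prod.snd) ((FR P p).image Prod.snd)) := by
  rw [zRects, ← card_sigma]
  refine card_bij (fun z _ => ⟨z.1, (z.2.2.1.2, z.2.2.2.2)⟩) ?_ ?_ ?_
  · rintro ⟨p, q, r, s⟩ hz
    have hz := mem_zRectTuples.1 hz
    have ⟨hp, _, _, _, _, _, _, hrq, hqs, _⟩ := hz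
    refine mem_sigma.2 ⟨hp, mem_zPairs.2 ⟨mem_image_of_mem _ hz.bottom_mem_FR,
      mem_image_of_mem _ hz.right_mem_FR, ⟨hrq.trans hqs, ?_⟩,
      q.2, mem_image_of_mem _ hz.left_mem_FL, hrq, hqs⟩⟩
    simp only [mem_image]
    rintro _ ⟨c, hc, rfl⟩
    exact hz.not_mem_FR_between hc
  · rintro ⟨p, q, r, s⟩ hz ⟨p', q', r', s'⟩ hz' h
    simp only [Sigma.mk.injEq, heq_eq_eq, Prod.mk.injEq] at h
    obtain ⟨rfl, hr, hs⟩ := h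
    have hz := mem_zRectTuples.1 hz
    have hz' := mem_zRectTuples.1 hz'
    have ⟨_, hqP, hrP, hsP, _, _, _, hrq, _⟩ := hz
    have ⟨_, hqP', hrP', hsP', _, _, _, hrq', _⟩ := hz'
    obtain rfl := hY r hrP r' hrP' hr
    obtain rfl := hY s hsP s' hsP' hs
    obtain rfl := hY q hqP q' hqP' (le_antisymm
      (hz.snd_le_of_mem_FL hz'.left_mem_FL hrq') (hz'.snd_le_of_mem_FL hz.left_mem_FL hrq))
    rfl
  · rintro ⟨p, y, y'⟩ h
    obtain ⟨hp, h⟩ := mem_sigma.1 h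
    obtain ⟨hy, hy', ⟨-, hgap⟩, _, hyl_mem, hyl, hly'⟩ := mem_zPairs.1 h
    obtain ⟨r, hr, rfl⟩ := mem_image.1 hy
    obtain ⟨s, hs, rfl⟩ := mem_image.1 hy'
    obtain ⟨l, hl, rfl⟩ := mem_image.1 hyl_mem
    obtain ⟨q, hq, hmin⟩ := ((FL P p).filter (r.2 < ·.2)).exists_min_image Prod.snd
      ⟨l, mem_filter.2 ⟨hl, hyl⟩⟩
    obtain ⟨hq, hrq⟩ := mem_filter.1 hq
    have hz := isZRect_of_consecutive hX hY hp hq hr hs hrq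
      ((hmin l (mem_filter.2 ⟨hl, hyl⟩)).trans_lt hly')
      (fun c hc => hgap c.2 (mem_image_of_mem _ hc))
      (fun c hc hrc => hmin c (mem_filter.2 ⟨hc, hrc⟩))
    exact ⟨(p, q, r, s), mem_zRectTuples.2 hz, rfl⟩

theorem two_mul_zRects_le_Funnel {P : Finset (ℝ × ℝ)} (hX : DistinctX P) (hY : DistinctY P) :
    2 * zRects P ≤ Funnel P := by
  rw [zRects_eq_sum hX hY, mul_sum]
  exact sum_le_sum fun p _ => two_mul_card_zPairs_le_mixValue (disjoint_image_snd_FL_FR hY)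

theorem Funnel_le_two_mul_zRects_add {P : Finset (ℝ × ℝ)} (hX : DistinctX P)
    (hY : DistinctY P) : Funnel P ≤ 2 * zRects P + 3 * #P := by
  rw [zRects_eq_sum hX hY, mul_sum, card_eq_sum_ones, mul_sum, ← sum_add_distrib]
  exact sum_le_sum fun p _ =>
    mixValue_le_two_mul_card_zPairs_add_three (disjoint_image_snd_FL_FR hY)

lemma DistinctX.neg {P : Finset (ℝ × ℝ)} (hX : DistinctX P) : DistinctX (-P) := by
  intro p hp q hq h
  simpa using hX (-p) (mem_neg'.1 hp) (-q) (mem_neg'.1 hq) (by simpa using h)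

lemma DistinctY.neg {P : Finset (ℝ × ℝ)} (hY : DistinctY P) : DistinctY (-P) := by
  intro p hp q hq h
  simpa using hY (-p) (mem_neg'.1 hp) (-q) (mem_neg'.1 hq) (by simpa using h)

lemma IsZRect.neg {P : Finset (ℝ × ℝ)} {p q r s : ℝ × ℝ} (hz : IsZRect P p q r s) :
    IsZRect (-P) (-r) (-s) (-p) (-q) := by
  obtain ⟨hp, hq, hr, hs, hqp, hpr, hrs, hrq, hqs, hsp, hbox⟩ := hz
  refine ⟨by simpa, by simpa, by simpa, by simpa, by simpa, by simpa, by simpa, by simpa,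
    by simpa, by simpa, fun t ht h1 h2 h3 h4 => ?_⟩
  simp only [Prod.fst_neg, Prod.snd_neg] at h1 h2 h3 h4
  rcases hbox (-t) (mem_neg'.1 ht) (by simp; linarith) (by simp; linarith) (by simp; linarith)
    (by simp; linarith) with h | h | h | h <;> simp [← h]

theorem zRects_neg (P : Finset (ℝ × ℝ)) : zRects (-P) = zRects P := by
  let i : (ℝ × ℝ) × (ℝ × ℝ) × (ℝ × ℝ) × (ℝ × ℝ) → (ℝ × ℝ) × (ℝ × ℝ) × (ℝ × ℝ) × (ℝ × ℝ) :=
    fun z => (-z.2.2.1, -z.2.2.2, -z.1, -z.2.1)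
  refine card_nbij' i i ?_ ?_ ?_ ?_
  · intro z hz
    exact mem_zRectTuples.2 (by simpa [i] using (mem_zRectTuples.1 hz).neg)
  · intro z hz
    exact mem_zRectTuples.2 (mem_zRectTuples.1 hz).neg
  all_goals exact fun z _ => by simp [i]

def flipX (v : ℝ × ℝ) : ℝ × ℝ := (-v.1, v.2)

lemma flipX_involutive : Function.Involutive flipX := fun v => by simp [flipX]

lemma FL_image_flipX (P : Finset (ℝ × ℝ)) (p : ℝ × ℝ) :
    FL (P.image flipX) (flipX p) = (FR P p).image flipX := by
  ext q
  obtain ⟨q, rfl⟩ : ∃ q', q = flipX q' := ⟨flipX q, (flipX_involutive q).symm⟩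
  rw [flipX_involutive.injective.mem_finset_image, mem_FL_iff, mem_FR_iff,
    flipX_involutive.injective.mem_finset_image, forall_mem_image]
  simp only [flipX, neg_le_neg_iff, neg_lt_neg_iff]
  grind

lemma FR_image_flipX (P : Finset (ℝ × ℝ)) (p : ℝ × ℝ) :
    FR (P.image flipX) (flipX p) = (FL P p).image flipX := by
  have h := congrArg (image flipX) (FL_image_flipX (P.image flipX) (flipX p))
  simp only [image_image, flipX_involutive.comp_self, image_id, flipX_involutive p] at h
  exact h.symm

theorem Funnel_image_flipX {P : Finset (ℝ × ℝ)} (hY : DistinctY P) :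
    Funnel (P.image flipX) = Funnel P := by
  rw [Funnel, sum_image fun _ _ _ _ h => flipX_involutive.injective h]
  refine sum_congr rfl fun p _ => ?_
  rw [fContrib, FL_image_flipX, FR_image_flipX, image_image, image_image]
  exact mixValue_comm (disjoint_image_snd_FL_FR hY)

theorem funnel_time_reversal (P : Finset (ℝ × ℝ))
    (hX : DistinctX P) (hY : DistinctY P) :
    (Funnel P : ℤ) ≥ (Funnel (P.image (fun v => (v.1, -v.2))) : ℤ) - 4 * P.card := by
  have hrev : P.image (fun v => (v.1, -v.2)) = (-P).image flipX := by
    rw [← image_neg_eq_neg, image_image]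
    congr 1
    funext v
    simp [flipX]
  have key : Funnel (P.image (fun v => (v.1, -v.2))) ≤ Funnel P + 3 * #P :=
    calc Funnel (P.image (fun v => (v.1, -v.2)))
        = Funnel (-P) := by rw [hrev, Funnel_image_flipX hY.neg]
      _ ≤ 2 * zRects (-P) + 3 * #(-P) := Funnel_le_two_mul_zRects_add hX.neg hY.neg
      _ = 2 * zRects P + 3 * #P := by rw [zRects_neg, card_neg]
      _ ≤ Funnel P + 3 * #P := Nat.add_le_add_right (two_mul_zRects_le_Funnel hX hY) _
  omega
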